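/- For the NHEG metric, the null vector field n = (r²/(2Γ))·(1/r², −1, 0, −k/r) satisfies n^ν ∇_ν n^μ = (−r/Γ) n^μ, i.e. n is geodesic but not affinely parameterized, with inaffinity −r/Γ. -/

import Mathlib

noncomputable section

/-- Points of ℝ⁴ in coordinates (t, r, θ, φ) = (p 0, p 1, p 2, p 3). -/
abbrev Pt4 := Fin 4 → ℝ

/-- Partial derivative of a scalar function in the μ-th coordinate direction. -/
noncomputable def pd (f : Pt4 → ℝ) (μ : Fin 4) (p : Pt4) : ℝ :=
  fderiv ℝ f p (Pi.single μ 1)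

/-- Christoffel symbols of the Levi-Civita connection of a metric g. -/
noncomputable def christoffel (g : Pt4 → Matrix (Fin 4) (Fin 4) ℝ)
    (ρ μ ν : Fin 4) (p : Pt4) : ℝ :=
  (1 / 2) * ∑ σ, (g p)⁻¹ ρ σ *
    (pd (fun q => g q σ ν) μ p + pd (fun q => g q σ μ) ν p - pd (fun q => g q μ ν) σ p)

/-- The NHEG metric. -/
noncomputable def nhegMetric (G γ : ℝ → ℝ) (k : ℝ) : Pt4 → Matrix (Fin 4) (Fin 4) ℝ :=
  fun p =>
    !![G (p 2) * (p 1) ^ 2 * (γ (p 2) * k ^ 2 - 1), 0, 0, G (p 2) * γ (p 2) * k * p 1;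
       0, G (p 2) / (p 1) ^ 2, 0, 0;
       0, 0, G (p 2), 0;
       G (p 2) * γ (p 2) * k * p 1, 0, 0, G (p 2) * γ (p 2)]

/-- The null vector field n = (r²/(2Γ))·(1/r², −1, 0, −k/r). -/
noncomputable def nField (G : ℝ → ℝ) (k : ℝ) : Pt4 → Fin 4 → ℝ :=
  fun p => fun μ =>
    (p 1) ^ 2 / (2 * G (p 2)) * (![1 / (p 1) ^ 2, -1, 0, -(k / p 1)] μ)

lemma pd_sep {f g : ℝ → ℝ} {f' g' : ℝ} {p : Pt4} (hf : HasDerivAt f f' (p 1))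
    (hg : HasDerivAt g g' (p 2)) (μ : Fin 4) :
    pd (fun q => f (q 1) * g (q 2)) μ p =
      (if μ = 1 then f' * g (p 2) else 0) + (if μ = 2 then f (p 1) * g' else 0) := by
  have h1 : HasFDerivAt (fun q : Pt4 => f (q 1))
      (f' • (ContinuousLinearMap.proj 1 : Pt4 →L[ℝ] ℝ)) p :=
    hf.comp_hasFDerivAt p (hasFDerivAt_apply 1 p)
  have h2 : HasFDerivAt (fun q : Pt4 => g (q 2))
      (g' • (ContinuousLinearMap.proj 2 : Pt4 →L[ℝ] ℝ)) p :=
    hg.comp_hasFDerivAt p (hasFDerivAt_apply 2 p)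
  have H := h1.mul h2
  rw [pd, show (fun q : Pt4 => f (q 1) * g (q 2)) = ((fun q => f (q 1)) * fun q => g (q 2)) from rfl, H.fderiv]
  fin_cases μ <;>
    (simp [ContinuousLinearMap.proj_apply, Pi.single_apply]; try ring)

lemma pd_zero (μ : Fin 4) (p : Pt4) : pd (fun _ => (0 : ℝ)) μ p = 0 := by
  simp [pd]

lemma pd_congr {f g : Pt4 → ℝ} (h : ∀ q, f q = g q) (μ : Fin 4) (p : Pt4) :
    pd f μ p = pd g μ p := by
  rw [pd, pd, funext h]

lemma nheg_inv (G γ : ℝ → ℝ) (k : ℝ) (p : Pt4) (hr : p 1 ≠ 0)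
    (hG : G (p 2) ≠ 0) (hγ : γ (p 2) ≠ 0) :
    (nhegMetric G γ k p)⁻¹ =
      !![-1 / (G (p 2) * (p 1) ^ 2), 0, 0, k / (G (p 2) * p 1);
         0, (p 1) ^ 2 / G (p 2), 0, 0;
         0, 0, 1 / G (p 2), 0;
         k / (G (p 2) * p 1), 0, 0, (1 - γ (p 2) * k ^ 2) / (G (p 2) * γ (p 2))] := by
  apply Matrix.inv_eq_right_inv
  ext i j
  fin_cases i <;> fin_cases j <;>
    · simp [nhegMetric, Matrix.mul_apply, Fin.sum_univ_four, Matrix.one_apply,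
        Matrix.vecHead, Matrix.vecTail, Fin.ext_iff]
      try rw [if_neg (by decide)]
      try field_simp
      try ring

set_option maxHeartbeats 2000000 in
/-- n is geodesic but not affinely parameterized: n^ν ∇_ν n^μ = (−r/Γ) n^μ. -/
theorem n_geodesic_inaffine (G γ : ℝ → ℝ) (hG : ContDiff ℝ (⊤ : ℕ∞) G) (hγ : ContDiff ℝ (⊤ : ℕ∞) γ)
    (hGpos : ∀ θ, 0 < G θ) (hγpos : ∀ θ, 0 < γ θ) (k : ℝ)
    (p : Pt4) (hr : 0 < p 1) (μ : Fin 4) :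
    (∑ ν, nField G k p ν * pd (fun q => nField G k q μ) ν p)
      + ∑ ν, ∑ α, christoffel (nhegMetric G γ k) μ ν α p
          * nField G k p ν * nField G k p α
      = (-(p 1) / G (p 2)) * nField G k p μ := by
  have hr' : p 1 ≠ 0 := ne_of_gt hr
  have hG0 : G (p 2) ≠ 0 := (hGpos _).ne'
  have hγ0 : γ (p 2) ≠ 0 := (hγpos _).ne'
  have DG : HasDerivAt G (deriv G (p 2)) (p 2) := (hG.differentiable (by simp) (p 2)).hasDerivAt
  have Dγ : HasDerivAt γ (deriv γ (p 2)) (p 2) := (hγ.differentiable (by simp) (p 2)).hasDerivAt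
  -- r-direction derivative building blocks
  have hfsq : HasDerivAt (fun x : ℝ => x ^ 2) (2 * p 1) (p 1) := by
    simpa using hasDerivAt_pow 2 (p 1)
  have hfid : HasDerivAt (fun x : ℝ => x) 1 (p 1) := hasDerivAt_id (p 1)
  have hfone : HasDerivAt (fun _ : ℝ => (1 : ℝ)) 0 (p 1) := hasDerivAt_const _ _
  have hfinv2 : HasDerivAt (fun x : ℝ => (x ^ 2)⁻¹) (-(2 * p 1) / (p 1 ^ 2) ^ 2) (p 1) := by
    have h := (hasDerivAt_pow 2 (p 1)).inv (pow_ne_zero 2 hr')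
    refine h.congr_deriv ?_
    norm_num
  have hfn0 : HasDerivAt (fun x : ℝ => x ^ 2 * (x ^ 2)⁻¹) 0 (p 1) := by
    have h := hfsq.mul hfinv2
    refine h.congr_deriv ?_
    field_simp
    ring
  have hfn1 : HasDerivAt (fun x : ℝ => x ^ 2 * (-1 : ℝ)) (-(2 * p 1)) (p 1) := by
    have h := hfsq.mul_const (-1 : ℝ)
    refine h.congr_deriv ?_
    ring
  have hfn3 : HasDerivAt (fun x : ℝ => x ^ 2 * -(k * x⁻¹)) (-k) (p 1) := by
    have h := hfsq.mul (((hasDerivAt_inv hr').const_mul k).neg)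
    refine h.congr_deriv ?_
    simp only [Pi.neg_apply]
    field_simp
    ring
  -- θ-direction derivative building blocks
  have hg00 : HasDerivAt (fun y => G y * (γ y * k ^ 2 - 1))
      (deriv G (p 2) * (γ (p 2) * k ^ 2 - 1) + G (p 2) * (deriv γ (p 2) * k ^ 2)) (p 2) :=
    DG.mul ((Dγ.mul_const _).sub_const 1)
  have hg03 : HasDerivAt (fun y => G y * γ y * k)
      ((deriv G (p 2) * γ (p 2) + G (p 2) * deriv γ (p 2)) * k) (p 2) :=
    (DG.mul Dγ).mul_const k
  have hgγ : HasDerivAt (fun y => G y * γ y)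
      (deriv G (p 2) * γ (p 2) + G (p 2) * deriv γ (p 2)) (p 2) := DG.mul Dγ
  have hg2inv : HasDerivAt (fun y => (2 * G y)⁻¹)
      (-(2 * deriv G (p 2)) / (2 * G (p 2)) ^ 2) (p 2) :=
    (DG.const_mul 2).inv (by positivity)
  -- pd of metric entries
  have h00 : ∀ ν, pd (fun q => G (q 2) * q 1 ^ 2 * (γ (q 2) * k ^ 2 - 1)) ν p =
      (if ν = 1 then 2 * p 1 * (G (p 2) * (γ (p 2) * k ^ 2 - 1)) else 0)
      + (if ν = 2 then p 1 ^ 2 *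
          (deriv G (p 2) * (γ (p 2) * k ^ 2 - 1) + G (p 2) * (deriv γ (p 2) * k ^ 2)) else 0) := by
    intro ν
    rw [pd_congr (g := fun q => (fun x : ℝ => x ^ 2) (q 1) *
      (fun y => G y * (γ y * k ^ 2 - 1)) (q 2)) (fun q => by ring) ν p]
    exact pd_sep hfsq hg00 ν
  have h03 : ∀ ν, pd (fun q => G (q 2) * γ (q 2) * k * q 1) ν p =
      (if ν = 1 then 1 * (G (p 2) * γ (p 2) * k) else 0)
      + (if ν = 2 then p 1 * ((deriv G (p 2) * γ (p 2) + G (p 2) * deriv γ (p 2)) * k) else 0) := by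
    intro ν
    rw [pd_congr (g := fun q => (fun x : ℝ => x) (q 1) *
      (fun y => G y * γ y * k) (q 2)) (fun q => by ring) ν p]
    exact pd_sep hfid hg03 ν
  have h11 : ∀ ν, pd (fun q => G (q 2) / q 1 ^ 2) ν p =
      (if ν = 1 then -(2 * p 1) / (p 1 ^ 2) ^ 2 * G (p 2) else 0)
      + (if ν = 2 then (p 1 ^ 2)⁻¹ * deriv G (p 2) else 0) := by
    intro ν
    rw [pd_congr (g := fun q => (fun x : ℝ => (x ^ 2)⁻¹) (q 1) * (fun y => G y) (q 2))
      (fun q => by ring) ν p]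
    exact pd_sep hfinv2 DG ν
  have h22 : ∀ ν, pd (fun q => G (q 2)) ν p =
      (if ν = 1 then 0 * G (p 2) else 0) + (if ν = 2 then 1 * deriv G (p 2) else 0) := by
    intro ν
    rw [pd_congr (g := fun q => (fun _ : ℝ => (1 : ℝ)) (q 1) * (fun y => G y) (q 2))
      (fun q => by ring) ν p]
    exact pd_sep hfone DG ν
  have h33 : ∀ ν, pd (fun q => G (q 2) * γ (q 2)) ν p =
      (if ν = 1 then 0 * (G (p 2) * γ (p 2)) else 0)
      + (if ν = 2 then 1 * (deriv G (p 2) * γ (p 2) + G (p 2) * deriv γ (p 2)) else 0) := by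
    intro ν
    rw [pd_congr (g := fun q => (fun _ : ℝ => (1 : ℝ)) (q 1) * (fun y => G y * γ y) (q 2))
      (fun q => by ring) ν p]
    exact pd_sep hfone hgγ ν
  -- pd of n components
  have hn0 : ∀ ν, pd (fun q => q 1 ^ 2 / (2 * G (q 2)) * (1 / q 1 ^ 2)) ν p =
      (if ν = 1 then 0 * (2 * G (p 2))⁻¹ else 0)
      + (if ν = 2 then p 1 ^ 2 * (p 1 ^ 2)⁻¹ * (-(2 * deriv G (p 2)) / (2 * G (p 2)) ^ 2) else 0) := by
    intro ν
    rw [pd_congr (g := fun q => (fun x : ℝ => x ^ 2 * (x ^ 2)⁻¹) (q 1) *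
      (fun y => (2 * G y)⁻¹) (q 2)) (fun q => by ring) ν p]
    exact pd_sep hfn0 hg2inv ν
  have hn1 : ∀ ν, pd (fun q => q 1 ^ 2 / (2 * G (q 2)) * (-1 : ℝ)) ν p =
      (if ν = 1 then -(2 * p 1) * (2 * G (p 2))⁻¹ else 0)
      + (if ν = 2 then p 1 ^ 2 * (-1 : ℝ) * (-(2 * deriv G (p 2)) / (2 * G (p 2)) ^ 2) else 0) := by
    intro ν
    rw [pd_congr (g := fun q => (fun x : ℝ => x ^ 2 * (-1 : ℝ)) (q 1) *
      (fun y => (2 * G y)⁻¹) (q 2)) (fun q => by ring) ν p]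
    exact pd_sep hfn1 hg2inv ν
  have hn2 : ∀ ν, pd (fun q => q 1 ^ 2 / (2 * G (q 2)) * (0 : ℝ)) ν p = 0 := by
    intro ν
    rw [pd_congr (g := fun _ => (0 : ℝ)) (fun q => by ring) ν p]
    exact pd_zero ν p
  have hn3 : ∀ ν, pd (fun q => q 1 ^ 2 / (2 * G (q 2)) * -(k / q 1)) ν p =
      (if ν = 1 then -k * (2 * G (p 2))⁻¹ else 0)
      + (if ν = 2 then p 1 ^ 2 * -(k * (p 1)⁻¹) * (-(2 * deriv G (p 2)) / (2 * G (p 2)) ^ 2) else 0) := by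
    intro ν
    rw [pd_congr (g := fun q => (fun x : ℝ => x ^ 2 * -(k * x⁻¹)) (q 1) *
      (fun y => (2 * G y)⁻¹) (q 2)) (fun q => by ring) ν p]
    exact pd_sep hfn3 hg2inv ν
  have hinv := nheg_inv G γ k p hr' hG0 hγ0
  fin_cases μ <;>
  · simp only [christoffel, Fin.sum_univ_four]
    rw [hinv]
    simp only [nhegMetric, nField, Fin.zero_eta, Fin.mk_one, Fin.reduceFinMk, Matrix.cons_val',
      Matrix.cons_val_zero, Matrix.cons_val_one, Matrix.head_cons, Matrix.cons_val_two,
      Matrix.tail_cons, Matrix.cons_val_three, Matrix.head_fin_const, Matrix.empty_val',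
      Matrix.cons_val_fin_one, Matrix.of_apply]
    simp only [h00, h03, h11, h22, h33, hn0, hn1, hn2, hn3, pd_zero]
    simp only [Fin.reduceEq, reduceIte]
    field_simp
    ring
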